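/- arXiv:2103.12301 — 3 statements merged into one kernel-verified Lean document; each statement's English description precedes it below -/
import Mathlib

section
/- Let (F(A))_{A ⊆ V, A ≠ ∅} be a family of real numbers indexed by nonempty subsets of a finite set V, such that for every nonempty B ⊆ V, the sum ∑_{∅ ≠ A ⊆ B} F(A) lies in [0,1]. Then for every nonempty B ⊆ V, |F(B)| ≤ |B|^{|B|}. -/
/-!
Strong induction on `B`. Writing `S_B = ∑_{∅ ≠ A ⊆ B} F A`, we have
`F B = S_B - ∑_{∅ ≠ A ⊊ B} F A` with `|S_B| ≤ 1`, and by induction each proper `A` has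
`|F A| ≤ |A| ^ |A| ≤ (|B| - 1) ^ |A|`. The binomial theorem gives
`1 + ∑_{∅ ≠ A ⊊ B} (|B| - 1) ^ |A| ≤ ∑_{A ⊆ B} (|B| - 1) ^ |A| = |B| ^ |B|`.
-/

open Finset

theorem Finset.sum_powerset_pow_card {α R : Type*} [CommSemiring R] (x : R) (s : Finset α) :
    ∑ t ∈ s.powerset, x ^ #t = (x + 1) ^ #s := by
  simpa using sum_pow_mul_eq_add_pow x 1 s

theorem Finset.one_add_sum_ssubset_pow_card_le {α R : Type*} [DecidableEq α] [CommSemiring R]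
    [PartialOrder R] [IsOrderedRing R] {x : R} (hx : 0 ≤ x) (s : Finset α) :
    1 + ∑ t ∈ (s.powerset.erase ∅).erase s, x ^ #t ≤ (x + 1) ^ #s := by
  calc 1 + ∑ t ∈ (s.powerset.erase ∅).erase s, x ^ #t
      ≤ 1 + ∑ t ∈ s.powerset.erase ∅, x ^ #t := by
        gcongr
        exact erase_subset _ _
    _ = ∑ t ∈ s.powerset, x ^ #t := by
        simpa using add_sum_erase _ (fun t => x ^ #t) (empty_mem_powerset s)
    _ = (x + 1) ^ #s := sum_powerset_pow_card x s

theorem abs_le_of_abs_sum_powerset_le_one {α : Type*} [DecidableEq α] {G : Finset α → ℝ}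
    {B : Finset α} (hB : B.Nonempty) {x : ℝ} (hx : 0 ≤ x)
    (hsum : |∑ A ∈ B.powerset.erase ∅, G A| ≤ 1)
    (hproper : ∀ A ⊂ B, A.Nonempty → |G A| ≤ x ^ #A) :
    |G B| ≤ (x + 1) ^ #B := by
  have hBmem : B ∈ B.powerset.erase ∅ := by simp [hB.ne_empty]
  have hsplit := add_sum_erase _ G hBmem
  have hterm : ∀ A ∈ (B.powerset.erase ∅).erase B, |G A| ≤ x ^ #A := by
    intro A hA
    simp only [mem_erase, mem_powerset] at hA
    exact hproper A (ssubset_of_subset_of_ne hA.2.2 hA.1) (nonempty_iff_ne_empty.2 hA.2.1)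
  calc |G B|
      = |∑ A ∈ B.powerset.erase ∅, G A - ∑ A ∈ (B.powerset.erase ∅).erase B, G A| := by
        rw [← hsplit, add_sub_cancel_right]
    _ ≤ 1 + ∑ A ∈ (B.powerset.erase ∅).erase B, |G A| :=
        (abs_sub _ _).trans (add_le_add hsum (abs_sum_le_sum_abs _ _))
    _ ≤ 1 + ∑ A ∈ (B.powerset.erase ∅).erase B, x ^ #A := by
        gcongr 1 + ?_; exact sum_le_sum hterm
    _ ≤ (x + 1) ^ #B := one_add_sum_ssubset_pow_card_le hx B

theorem stmt_4 {α : Type*} [DecidableEq α] (V : Finset α) (F : Finset α → ℝ)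
    (h : ∀ B ⊆ V, B.Nonempty →
      (∑ A ∈ B.powerset.filter (fun A => A ≠ ∅), F A) ∈ Set.Icc (0 : ℝ) 1) :
    ∀ B ⊆ V, B.Nonempty → |F B| ≤ (B.card : ℝ) ^ B.card := by
  intro B
  induction B using Finset.strongInduction with
  | _ B ih =>
  intro hBV hB
  have hcard : (1 : ℝ) ≤ #B := by exact_mod_cast hB.card_pos
  have hsum : |∑ A ∈ B.powerset.erase ∅, F A| ≤ 1 := by
    obtain ⟨h0, h1⟩ := filter_ne' B.powerset ∅ ▸ h B hBV hB
    exact abs_le.2 ⟨by linarith, h1⟩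
  have hproper : ∀ A ⊂ B, A.Nonempty → |F A| ≤ ((#B : ℝ) - 1) ^ #A := fun A hAB hA =>
    (ih A hAB (hAB.subset.trans hBV) hA).trans <| pow_le_pow_left₀ (Nat.cast_nonneg _)
      (le_sub_iff_add_le.2 (by exact_mod_cast card_lt_card hAB)) _
  simpa using abs_le_of_abs_sum_powerset_le_one hB (by linarith) hsum hproper
end

section
/- Let (b_j)_{j≥1} be a real sequence satisfying, for all j ≥ 1, the relation −d_j·b_j + f_j·b_{j−1} + ∑_{l=1}^{j+1} τ(l,j)·b_l = 0, where d_j = λ + j(j−1) + jσ, f_j = (j−1)σ (with b_0 := 0), τ(j+1,j) = (j+1)j, and for i ≤ j ≤ 2i, τ(i,j) = C(i, j−i)∫_{(−1,1)}(1+z)^{2i−j}(−z)^{j−i} ν(dz), τ(i,j) = 0 otherwise. If ∫_{(−1,1)} z ν(dz) = σ, then b_j = 0 for all j ≥ 2. -/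
/-! Assume inductively that `b 2 = ⋯ = b j = 0`. Then the relation at `j` only involves `b 1` and
`b (j + 1)`. The martingale condition makes the coefficient of `b 1` vanish: at `j = 1` it is
`τ 1 1 - (λ + σ) = 0`, at `j = 2` it is `σ + τ 1 2 = 0`, and for `j ≥ 3` it is `τ 1 j = 0`. What remains,
`(j + 1) j · b (j + 1) = 0`, gives `b (j + 1) = 0`. -/

open MeasureTheory Finset

lemma sum_Icc_one_succ_eq_add {M : Type*} [AddCommMonoid M] {f : ℕ → M} {j : ℕ} (hj : 1 ≤ j)
    (hf : ∀ l, 2 ≤ l → l ≤ j → f l = 0) :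
    ∑ l ∈ Icc 1 (j + 1), f l = f 1 + f (j + 1) :=
  sum_eq_add_of_mem 1 (j + 1) (by simp) (by simp) (by omega)
    fun l hl hne => hf l (by simp at hl; omega) (by simp at hl; omega)

lemma integrableOn_id_Ioo_neg_one_one (ν : Measure ℝ) [IsFiniteMeasure ν] :
    IntegrableOn (fun z : ℝ => z) (Set.Ioo (-1) 1) ν :=
  (continuous_id.integrableOn_Icc).mono_set Set.Ioo_subset_Icc_self

section Recursion

variable {σ lam : ℝ} {τ : ℕ → ℕ → ℝ} {b : ℕ → ℝ}

lemma diag_sub_add_tau_one_mul_eq_zero (h11 : τ 1 1 = lam + σ) (h12 : τ 1 2 = -σ)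
    (h1high : ∀ j, 2 < j → τ 1 j = 0) {j : ℕ} (hj : 1 ≤ j)
    (hb : ∀ l, 2 ≤ l → l ≤ j → b l = 0) :
    -(lam + (j : ℝ) * ((j : ℝ) - 1) + (j : ℝ) * σ) * b j + ((j : ℝ) - 1) * σ * b (j - 1)
      + τ 1 j * b 1 = 0 := by
  rcases (by omega : j = 1 ∨ j = 2 ∨ 2 < j) with rfl | rfl | hj3
  · rw [h11]; ring
  · rw [h12, hb 2 le_rfl le_rfl]; norm_num
  · rw [h1high j hj3, hb j (by omega) le_rfl, hb (j - 1) (by omega) (by omega)]; ring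

lemma eq_zero_of_forall_relation (h11 : τ 1 1 = lam + σ) (h12 : τ 1 2 = -σ)
    (h1high : ∀ j, 2 < j → τ 1 j = 0)
    (hτdiag : ∀ j : ℕ, 1 ≤ j → τ (j + 1) j = ((j : ℝ) + 1) * j)
    (hrel : ∀ j : ℕ, 1 ≤ j →
      -(lam + (j : ℝ) * ((j : ℝ) - 1) + (j : ℝ) * σ) * b j
        + ((j : ℝ) - 1) * σ * b (j - 1)
        + ∑ l ∈ Icc 1 (j + 1), τ l j * b l = 0) :
    ∀ j : ℕ, 2 ≤ j → b j = 0 := by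
  suffices h : ∀ j, 1 ≤ j → ∀ l, 2 ≤ l → l ≤ j → b l = 0 from
    fun j hj => h j (by omega) j hj le_rfl
  refine Nat.le_induction (fun l hl hl1 => by omega) fun j hj hb l hl2 hlj => ?_
  rcases Nat.lt_or_eq_of_le hlj with hlt | rfl
  · exact hb l hl2 (by omega)
  have hsum := sum_Icc_one_succ_eq_add (f := fun l => τ l j * b l) hj
    fun l hl2 hlj => by simp only [hb l hl2 hlj, mul_zero]
  have hlower := diag_sub_add_tau_one_mul_eq_zero h11 h12 h1high hj hb
  have hlast : ((j : ℝ) + 1) * j * b (j + 1) = 0 := by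
    have := hrel j hj
    rw [hsum, hτdiag j hj] at this
    linarith
  have hpos : ((j : ℝ) + 1) * j ≠ 0 := by positivity
  exact (mul_eq_zero.mp hlast).resolve_left hpos

end Recursion

open MeasureTheory in
theorem stmt_11_general (σ : ℝ) (ν : Measure ℝ) [IsFiniteMeasure ν]
    (lam : ℝ) (hlam : lam = (ν (Set.Ioo (-1 : ℝ) 1)).toReal)
    (τ : ℕ → ℕ → ℝ)
    (hτdiag : ∀ j : ℕ, 1 ≤ j → τ (j + 1) j = ((j : ℝ) + 1) * j)
    (hτmid : ∀ i j : ℕ, 1 ≤ i → i ≤ j → j ≤ 2 * i →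
      τ i j = (Nat.choose i (j - i) : ℝ) *
        ∫ z in Set.Ioo (-1 : ℝ) 1, (1 + z) ^ (2 * i - j) * (-z) ^ (j - i) ∂ν)
    (hτhigh : ∀ i j : ℕ, 1 ≤ i → 2 * i < j → τ i j = 0)
    (b : ℕ → ℝ)
    (hrel : ∀ j : ℕ, 1 ≤ j →
      -(lam + (j : ℝ) * ((j : ℝ) - 1) + (j : ℝ) * σ) * b j
        + ((j : ℝ) - 1) * σ * b (j - 1)
        + ∑ l ∈ Finset.Icc 1 (j + 1), τ l j * b l = 0)
    (hmart : ∫ z in Set.Ioo (-1 : ℝ) 1, z ∂ν = σ) :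
    ∀ j : ℕ, 2 ≤ j → b j = 0 := by
  have h11 : τ 1 1 = lam + σ := by
    rw [hτmid 1 1 le_rfl le_rfl (by norm_num)]
    simp only [Nat.sub_self, Nat.choose_zero_right, Nat.cast_one, one_mul, pow_zero, mul_one,
      show 2 * 1 - 1 = 1 from rfl, pow_one]
    rw [integral_add (integrable_const 1) (integrableOn_id_Ioo_neg_one_one ν), hmart, hlam]
    simp [measureReal_def]
  have h12 : τ 1 2 = -σ := by
    rw [hτmid 1 2 le_rfl (by norm_num) (by norm_num)]
    simp only [Nat.sub_self, Nat.choose_self, Nat.cast_one, one_mul, pow_zero, pow_one,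
      show 2 - 1 = 1 from rfl]
    rw [integral_neg, hmart]
  exact eq_zero_of_forall_relation h11 h12 (fun j hj => hτhigh 1 j le_rfl (by omega)) hτdiag hrel

open MeasureTheory in
theorem stmt_11 (σ : ℝ) (hσ : 0 ≤ σ) (ν : Measure ℝ) [IsFiniteMeasure ν]
    (lam : ℝ) (hlam : lam = (ν (Set.Ioo (-1 : ℝ) 1)).toReal)
    (τ : ℕ → ℕ → ℝ)
    (hτlow : ∀ i j : ℕ, 1 ≤ i → j + 1 < i → τ i j = 0)
    (hτdiag : ∀ j : ℕ, 1 ≤ j → τ (j + 1) j = ((j : ℝ) + 1) * j)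
    (hτmid : ∀ i j : ℕ, 1 ≤ i → i ≤ j → j ≤ 2 * i →
      τ i j = (Nat.choose i (j - i) : ℝ) *
        ∫ z in Set.Ioo (-1 : ℝ) 1, (1 + z) ^ (2 * i - j) * (-z) ^ (j - i) ∂ν)
    (hτhigh : ∀ i j : ℕ, 1 ≤ i → 2 * i < j → τ i j = 0)
    (b : ℕ → ℝ) (hb0 : b 0 = 0)
    (hrel : ∀ j : ℕ, 1 ≤ j →
      -(lam + (j : ℝ) * ((j : ℝ) - 1) + (j : ℝ) * σ) * b j
        + ((j : ℝ) - 1) * σ * b (j - 1)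
        + ∑ l ∈ Finset.Icc 1 (j + 1), τ l j * b l = 0)
    (hmart : ∫ z in Set.Ioo (-1 : ℝ) 1, z ∂ν = σ) :
    ∀ j : ℕ, 2 ≤ j → b j = 0 :=
  stmt_11_general σ ν lam hlam τ hτdiag hτmid hτhigh b hrel hmart
end

section
/- Let σ ≥ 0, λ ≥ 0, and let π : ℕ → [0,∞) be a probability distribution satisfying the recursion π(k) = (σ/k)π(k−1) + (λ/(k(k−1)))∑_{j=⌊(k+1)/2⌋}^{k−1} π(j) for k ≥ 2. Then for every n ≥ 0 and every k ≥ 3·2^n, π(k) ≤ (σ(σ+λ)+λ)·(σ+λ)^n / (k(k−1)·∏_{i=1}^n (2^{−i}k − 1)). -/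
/-!
Feeding the mass bound `π j ≤ 1` into the recursion gives `π k ≤ (σ + λ) / k`, and feeding that
back once more gives the case `n = 0`. In the step from `n` to `n + 1`, every index `j` that the
recursion for `π k` involves satisfies `j ≥ k / 2 ≥ 3 · 2ⁿ`, so the level-`n` bound applies to all
of them, with `∏_{i=1}^n (j/2^i - 1)` bounded below by its value at `k / 2`. The telescoping sum
`∑_{j ≥ m} 1/(j(j-1)) ≤ 1/(m-1)` then produces a factor `(σ + λ) / (k/2 - 1)`, and
`∏_{i=1}^{n+1} (k/2^i - 1) = (k/2 - 1) · ∏_{i=1}^n ((k/2)/2^i - 1)`.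
-/

open Finset

lemma sum_Icc_one_div_mul_sub_one_le {m : ℕ} (hm : 2 ≤ m) (K : ℕ) :
    ∑ j ∈ Icc m K, 1 / ((j : ℝ) * (j - 1)) ≤ 1 / (m - 1) := by
  have hm' : (1 : ℝ) < m := by exact_mod_cast hm
  rcases lt_or_ge K m with hK | hK
  · rw [Icc_eq_empty (by omega), sum_empty]
    exact one_div_nonneg.2 (by linarith)
  let f : ℕ → ℝ := fun i => -1 / ((i : ℝ) - 1)
  have telescope : ∀ j ∈ Icc m K, 1 / ((j : ℝ) * (j - 1)) = f (j + 1) - f j := by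
    intro j hj
    have : (1 : ℝ) < j := by exact_mod_cast (by grind : 1 < j)
    have : (j : ℝ) - 1 ≠ 0 := by linarith
    have : (j : ℝ) ≠ 0 := by linarith
    simp only [f, Nat.cast_add, Nat.cast_one, add_sub_cancel_right]
    field_simp
    ring
  rw [sum_congr rfl telescope, sum_Icc_sub hK]
  have : (0 : ℝ) ≤ 1 / K := by positivity
  simp only [f]
  push_cast
  rw [add_sub_cancel_right]
  linarith [neg_div (K : ℝ) 1, neg_div ((m : ℝ) - 1) 1]

lemma sum_Icc_le_div_sub_one {f : ℕ → ℝ} {D : ℝ} (hD : 0 ≤ D) {m : ℕ} (hm : 2 ≤ m) (K : ℕ)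
    (hf : ∀ j ∈ Icc m K, f j ≤ D / (j * (j - 1))) :
    ∑ j ∈ Icc m K, f j ≤ D / (m - 1) :=
  calc ∑ j ∈ Icc m K, f j ≤ ∑ j ∈ Icc m K, D * (1 / ((j : ℝ) * (j - 1))) :=
        sum_le_sum fun j hj => by rw [mul_one_div]; exact hf j hj
    _ ≤ D * (1 / (m - 1)) := by
        rw [← mul_sum]
        gcongr
        exact sum_Icc_one_div_mul_sub_one_le hm K
    _ = D / (m - 1) := mul_one_div D _

def SatisfiesRecursion (σ lam : ℝ) (π : ℕ → ℝ) : Prop :=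
  ∀ k : ℕ, 2 ≤ k → π k = (σ / k) * π (k - 1)
    + (lam / ((k : ℝ) * ((k : ℝ) - 1))) * ∑ j ∈ Icc ((k + 1) / 2) (k - 1), π j

noncomputable def halvingProd (n : ℕ) (x : ℝ) : ℝ := ∏ i ∈ Icc 1 n, (x / 2 ^ i - 1)

lemma halvingProd_succ (n : ℕ) (x : ℝ) :
    halvingProd (n + 1) x = (x / 2 - 1) * halvingProd n (x / 2) := by
  induction n with
  | zero => simp [halvingProd]
  | succ n ih =>
    rw [halvingProd, prod_Icc_succ_top (by omega), ← halvingProd, ih, halvingProd, halvingProd,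
      prod_Icc_succ_top (by omega), div_div, ← pow_succ', mul_assoc]

lemma halvingProd_pos {n : ℕ} {x : ℝ} (hx : 2 ^ n < x) : 0 < halvingProd n x :=
  prod_pos fun i hi => by
    have : (2 : ℝ) ^ i ≤ 2 ^ n := pow_le_pow_right₀ one_le_two (mem_Icc.1 hi).2
    rw [sub_pos, one_lt_div (by positivity)]
    linarith

lemma halvingProd_le_halvingProd {n : ℕ} {x y : ℝ} (hx : 2 ^ n ≤ x) (hxy : x ≤ y) :
    halvingProd n x ≤ halvingProd n y :=
  prod_le_prod (fun i hi => by
    have : (2 : ℝ) ^ i ≤ 2 ^ n := pow_le_pow_right₀ one_le_two (mem_Icc.1 hi).2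
    rw [sub_nonneg, one_le_div (by positivity)]
    linarith) fun i _ => by gcongr

namespace SatisfiesRecursion

variable {σ lam : ℝ} {π : ℕ → ℝ}

lemma le_add (hrec : SatisfiesRecursion σ lam π) (hσ : 0 ≤ σ) (hlam : 0 ≤ lam) {k : ℕ}
    (hk : 2 ≤ k) {a b : ℝ} (ha : π (k - 1) ≤ a)
    (hb : ∑ j ∈ Icc ((k + 1) / 2) (k - 1), π j ≤ b) :
    π k ≤ σ / k * a + lam / (k * (k - 1)) * b := by
  have : (1 : ℝ) < k := by exact_mod_cast hk
  rw [hrec k hk]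
  gcongr

lemma le_div (hrec : SatisfiesRecursion σ lam π) (hσ : 0 ≤ σ) (hlam : 0 ≤ lam)
    (hmass : ∀ s : Finset ℕ, ∑ j ∈ s, π j ≤ 1) {k : ℕ} (hk : 2 ≤ k) :
    π k ≤ (σ + lam) / k := by
  have hk' : (2 : ℝ) ≤ k := by exact_mod_cast hk
  have hsingle : π (k - 1) ≤ 1 := by simpa using hmass {k - 1}
  calc π k ≤ σ / k * 1 + lam / (k * (k - 1)) * 1 := hrec.le_add hσ hlam hk hsingle (hmass _)
    _ ≤ σ / k + lam / k := by
      rw [mul_one, mul_one]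
      gcongr
      nlinarith
    _ = (σ + lam) / k := by rw [add_div]

lemma le_div_mul_sub_one (hrec : SatisfiesRecursion σ lam π) (hσ : 0 ≤ σ) (hlam : 0 ≤ lam)
    (hmass : ∀ s : Finset ℕ, ∑ j ∈ s, π j ≤ 1) {k : ℕ} (hk : 3 ≤ k) :
    π k ≤ (σ * (σ + lam) + lam) / (k * (k - 1)) := by
  have hk' : (3 : ℝ) ≤ k := by exact_mod_cast hk
  have hprev : π (k - 1) ≤ (σ + lam) / ((k : ℝ) - 1) := by
    simpa [Nat.cast_sub (by omega : 1 ≤ k)] using hrec.le_div hσ hlam hmass (by omega : 2 ≤ k - 1)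
  calc π k ≤ σ / k * ((σ + lam) / (k - 1)) + lam / (k * (k - 1)) * 1 :=
        hrec.le_add hσ hlam (by omega) hprev (hmass _)
    _ = (σ * (σ + lam) + lam) / (k * (k - 1)) := by
      have : (k : ℝ) - 1 ≠ 0 := by linarith
      have : (k : ℝ) ≠ 0 := by linarith
      field_simp

lemma le_succ_of_le (hrec : SatisfiesRecursion σ lam π) (hσ : 0 ≤ σ) (hlam : 0 ≤ lam)
    {n : ℕ} {B : ℝ} (hB : 0 ≤ B)
    (hn : ∀ j : ℕ, 3 * 2 ^ n ≤ j → π j ≤ B / (j * (j - 1) * halvingProd n j))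
    {k : ℕ} (hk : 3 * 2 ^ (n + 1) ≤ k) :
    π k ≤ (σ + lam) * B / (k * (k - 1) * halvingProd (n + 1) k) := by
  have hk6 : 6 * 2 ^ n ≤ k := by rw [pow_succ] at hk; omega
  have hpow : 1 ≤ 2 ^ n := Nat.one_le_two_pow
  have hk' : (3 : ℝ) * 2 ^ n ≤ k / 2 := by
    rw [le_div_iff₀ two_pos]
    exact_mod_cast (by omega : 3 * 2 ^ n * 2 ≤ k)
  have h2n : (1 : ℝ) ≤ 2 ^ n := one_le_pow₀ one_le_two
  have hP := halvingProd_pos (n := n) (x := k / 2) (by linarith)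
  set P := halvingProd n (k / 2) with hPdef
  have hD : 0 ≤ B / P := div_nonneg hB hP.le
  have hwindow : ∀ j : ℕ, k ≤ 2 * j → π j ≤ B / P / (j * (j - 1)) := by
    intro j hj
    have hj' : (k : ℝ) / 2 ≤ j := by
      rw [div_le_iff₀ two_pos]
      exact_mod_cast (by omega : k ≤ j * 2)
    have : (1 : ℝ) < j := by linarith
    rw [div_div, mul_comm P]
    refine (hn j (by omega)).trans (div_le_div_of_nonneg_left hB (by positivity) ?_)
    gcongr
    exact halvingProd_le_halvingProd (by linarith) hj'
  have hprev : π (k - 1) ≤ B / P / ((k - 1) * (k / 2 - 1)) := by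
    have := hwindow (k - 1) (by omega)
    rw [Nat.cast_sub (by omega), Nat.cast_one] at this
    refine this.trans (div_le_div_of_nonneg_left hD (by nlinarith) ?_)
    gcongr <;> linarith
  have hsum : ∑ j ∈ Icc ((k + 1) / 2) (k - 1), π j ≤ B / P / (k / 2 - 1) := by
    have hm : (k : ℝ) / 2 - 1 ≤ ((k + 1) / 2 : ℕ) - 1 := by
      rw [sub_le_sub_iff_right, div_le_iff₀ two_pos]
      exact_mod_cast (by omega : k ≤ (k + 1) / 2 * 2)
    refine (sum_Icc_le_div_sub_one hD (by omega) _ fun j hj => hwindow j (by grind)).trans ?_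
    gcongr
    linarith
  calc π k ≤ σ / k * (B / P / ((k - 1) * (k / 2 - 1)))
        + lam / (k * (k - 1)) * (B / P / (k / 2 - 1)) :=
        hrec.le_add hσ hlam (by omega) hprev hsum
    _ = (σ + lam) * B / (k * (k - 1) * halvingProd (n + 1) k) := by
      rw [halvingProd_succ, ← hPdef]
      have : (k : ℝ) / 2 - 1 ≠ 0 := by linarith
      have : (k : ℝ) - 1 ≠ 0 := by linarith
      have : (k : ℝ) ≠ 0 := by linarith
      field_simp

end SatisfiesRecursion

theorem stmt_17_general (σ lam : ℝ) (hσ : 0 ≤ σ) (hlam : 0 ≤ lam)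
    (π : ℕ → ℝ) (hpos : ∀ k, 0 ≤ π k)
    (hsummable : Summable π) (hsum : ∑' k : ℕ, π k = 1)
    (hrec : ∀ k : ℕ, 2 ≤ k → π k = (σ / k) * π (k - 1)
      + (lam / ((k : ℝ) * ((k : ℝ) - 1))) *
          ∑ j ∈ Finset.Icc ((k + 1) / 2) (k - 1), π j) :
    ∀ n k : ℕ, 3 * 2 ^ n ≤ k →
      π k ≤ (σ * (σ + lam) + lam) * (σ + lam) ^ n /
        ((k : ℝ) * ((k : ℝ) - 1) * ∏ i ∈ Finset.Icc 1 n, ((k : ℝ) / 2 ^ i - 1)) := by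
  replace hrec : SatisfiesRecursion σ lam π := hrec
  have hmass (s : Finset ℕ) : ∑ j ∈ s, π j ≤ 1 :=
    hsum ▸ hsummable.sum_le_tsum s fun i _ => hpos i
  have hs : 0 ≤ σ + lam := add_nonneg hσ hlam
  intro n
  induction n with
  | zero =>
    intro k hk
    simpa using hrec.le_div_mul_sub_one hσ hlam hmass (by simpa using hk)
  | succ n ih =>
    intro k hk
    have hB : 0 ≤ (σ * (σ + lam) + lam) * (σ + lam) ^ n :=
      mul_nonneg (add_nonneg (mul_nonneg hσ hs) hlam) (pow_nonneg hs n)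
    have h := hrec.le_succ_of_le hσ hlam hB ih hk
    rwa [mul_left_comm, ← pow_succ'] at h

theorem stmt_17 (σ lam : ℝ) (hσ : 0 ≤ σ) (hlam : 0 ≤ lam)
    (π : ℕ → ℝ) (hpos : ∀ k, 0 ≤ π k) (hπ0 : π 0 = 0)
    (hsummable : Summable π) (hsum : ∑' k : ℕ, π k = 1)
    (hrec : ∀ k : ℕ, 2 ≤ k → π k = (σ / k) * π (k - 1)
      + (lam / ((k : ℝ) * ((k : ℝ) - 1))) *
          ∑ j ∈ Finset.Icc ((k + 1) / 2) (k - 1), π j) :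
    ∀ n k : ℕ, 3 * 2 ^ n ≤ k →
      π k ≤ (σ * (σ + lam) + lam) * (σ + lam) ^ n /
        ((k : ℝ) * ((k : ℝ) - 1) * ∏ i ∈ Finset.Icc 1 n, ((k : ℝ) / 2 ^ i - 1)) :=
  stmt_17_general σ lam hσ hlam π hpos hsummable hsum hrec
end
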